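/- Let M ≥ N ≥ 1 be integers and a > −1 a real number, and set e_a(x) = exp((a/(1+a))·2Mx) and f_n(x) = L_n^{(2(M−N))}(2Mx). Then for every integer n ≥ 1, ⟨e_a, f_n⟩_4 = ((1+a)/(2M))^{2(M−N)+1} · ( (−a)^{n+1} (n+2(M−N)+1)!/n! − (−a)^{n−1} (n+2(M−N))!/(n−1)! ), and for n = 0, ⟨e_a, f_0⟩_4 = −((1+a)/(2M))^{2(M−N)+1} · a · (2(M−N)+1)!. -/

import Mathlib

/-!
Since `e_a(x) e^{-2Mx} = e^{-sx}` with `s = 2M/(1+a)`, the integrand of `⟨e_a, f_n⟩₄` is a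
polynomial times `e^{-sx}`, and the Gamma integrals `∫₀^∞ x^m e^{-sx} dx = m!/s^{m+1}` turn the
skew product into finite sums over the Laguerre coefficients. With `α = 2(M-N)` these are
evaluated by the binomial theorem,
`∑_k (-1)^k C(n+α, n-k) (k+α)!/k! u^k = (n+α)!/n! (1-u)^n`
(the Laplace transform of `x^α L_n^{(α)}`), together with the same identity for
`L_{n-1}^{(α+1)}`, which handles the sum weighted by `k` because `(L_n^{(α)})' = -L_{n-1}^{(α+1)}`.
They are needed at `u = 1 + a`, where `(1-u)^n = (-a)^n`.
-/

open MeasureTheory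

/-- The generalized Laguerre polynomial
`L_n^(α)(x) = ∑_{k=0}^{n} (-1)^k (n+α choose n-k) x^k / k!`. -/
noncomputable def genLaguerre (n α : ℕ) (x : ℝ) : ℝ :=
  ∑ k ∈ Finset.range (n + 1),
    (-1 : ℝ) ^ k * ((n + α).choose (n - k) : ℝ) * x ^ k / (k.factorial : ℝ)

/-- The skew inner product
`⟨f, g⟩₄ = ∫_0^∞ (f(x) g'(x) - f'(x) g(x)) x^(2(M-N)+1) e^(-2Mx) dx`. -/
noncomputable def skewInner (M N : ℕ) (f g : ℝ → ℝ) : ℝ :=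
  ∫ x in Set.Ioi (0 : ℝ),
    (f x * deriv g x - deriv f x * g x) * x ^ (2 * (M - N) + 1) *
      Real.exp (-(2 * (M : ℝ)) * x)

open Set Real Finset
open scoped Nat

lemma integrableOn_pow_mul_exp_neg_mul_Ioi (m : ℕ) {r : ℝ} (hr : 0 < r) :
    IntegrableOn (fun x : ℝ => x ^ m * exp (-(r * x))) (Ioi 0) := by
  simpa [rpow_natCast] using
    integrableOn_rpow_mul_exp_neg_mul_rpow (p := 1) (s := m)
      (neg_one_lt_zero.trans_le m.cast_nonneg) one_pos hr

lemma integral_pow_mul_exp_neg_mul_Ioi (m : ℕ) {r : ℝ} (hr : 0 < r) :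
    ∫ x in Ioi (0 : ℝ), x ^ m * exp (-(r * x)) = m ! / r ^ (m + 1) := by
  have h := integral_rpow_mul_exp_neg_mul_Ioi (a := (m + 1 : ℕ)) (by positivity) hr
  rw [Nat.cast_succ, add_sub_cancel_right, Gamma_nat_eq_factorial] at h
  simp_rw [rpow_natCast] at h
  rw [h, show (m : ℝ) + 1 = (m + 1 : ℕ) by push_cast; rfl, rpow_natCast]
  ring

lemma hasDerivAt_sum_mul_pow (d : ℕ) (c : ℕ → ℝ) (x : ℝ) :
    HasDerivAt (fun x => ∑ k ∈ range d, c k * x ^ k) (∑ k ∈ range d, c k * (k * x ^ (k - 1))) x :=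
  HasDerivAt.fun_sum fun k _ => (hasDerivAt_pow k x).const_mul (c k)

lemma natCast_mul_pow_sub_one_mul {R : Type*} [Semiring R] (k : ℕ) (x : R) :
    k * x ^ (k - 1) * x = k * x ^ k := by
  cases k with
  | zero => simp
  | succ k => rw [Nat.add_sub_cancel, pow_succ, mul_assoc]

lemma skewInner_exp_sum_mul_pow (M N d : ℕ) (c : ℕ → ℝ) {β : ℝ} (hβ : β < 2 * M) :
    skewInner M N (fun x => exp (β * x)) (fun x => ∑ k ∈ range d, c k * x ^ k) =
      ∑ k ∈ range d, c k *
        (k * (k + 2 * (M - N))! / (2 * M - β) ^ (k + 2 * (M - N) + 1)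
          - β * (k + 2 * (M - N) + 1)! / (2 * M - β) ^ (k + 2 * (M - N) + 2)) := by
  unfold skewInner
  set α := 2 * (M - N)
  set s := 2 * (M : ℝ) - β with hs_def
  have hs : 0 < s := sub_pos.2 hβ
  have hweight : ∀ x, exp (β * x) * exp (-(2 * M) * x) = exp (-(s * x)) := fun x => by
    rw [← exp_add, hs_def]; ring_nf
  have hintegrand : ∀ x : ℝ,
      (exp (β * x) * deriv (fun x => ∑ k ∈ range d, c k * x ^ k) x
          - deriv (fun x => exp (β * x)) x * ∑ k ∈ range d, c k * x ^ k)
        * x ^ (α + 1) * exp (-(2 * M) * x)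
      = ∑ k ∈ range d, (c k * k * (x ^ (k + α) * exp (-(s * x)))
          - c k * β * (x ^ (k + α + 1) * exp (-(s * x)))) := fun x => by
    rw [(hasDerivAt_sum_mul_pow d c x).deriv, ((hasDerivAt_id' x).const_mul β).exp.deriv,
      ← hweight, mul_sum, mul_sum, ← sum_sub_distrib, sum_mul, sum_mul]
    refine sum_congr rfl fun k _ => ?_
    simp only [pow_add, pow_succ]
    linear_combination (c k * x ^ α * exp (β * x) * exp (-(2 * M) * x)) *
      natCast_mul_pow_sub_one_mul k x
  simp_rw [hintegrand]
  have hint : ∀ m, IntegrableOn (fun x : ℝ => x ^ m * exp (-(s * x))) (Ioi 0) :=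
    fun m => integrableOn_pow_mul_exp_neg_mul_Ioi m hs
  rw [integral_finsetSum _ fun k _ => by
    exact Integrable.sub ((hint _).const_mul _) ((hint _).const_mul _)]
  refine sum_congr rfl fun k _ => ?_
  rw [integral_sub ((hint _).const_mul _) ((hint _).const_mul _), integral_const_mul,
    integral_const_mul, integral_pow_mul_exp_neg_mul_Ioi _ hs, integral_pow_mul_exp_neg_mul_Ioi _ hs]
  ring

noncomputable def laguerreCoeff (n α k : ℕ) : ℝ := (-1) ^ k * (n + α).choose (n - k) / k !

lemma genLaguerre_mul_eq_sum (n α : ℕ) (c x : ℝ) :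
    genLaguerre n α (c * x) = ∑ k ∈ range (n + 1), laguerreCoeff n α k * c ^ k * x ^ k := by
  refine sum_congr rfl fun k _ => ?_
  rw [laguerreCoeff, mul_pow]
  ring

lemma laguerreCoeff_mul_factorial {n k : ℕ} (hk : k ≤ n) (α : ℕ) :
    laguerreCoeff n α k * (k + α)! = (-1) ^ k * ((n + α)! / n !) * n.choose k := by
  have hα : n + α - (n - k) = k + α := by omega
  rw [laguerreCoeff, Nat.cast_choose ℝ (by omega : n - k ≤ n + α), hα, Nat.cast_choose ℝ hk]
  field_simp

lemma sum_laguerreCoeff_mul_factorial_mul_pow (n α : ℕ) (u : ℝ) :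
    ∑ k ∈ range (n + 1), laguerreCoeff n α k * (k + α)! * u ^ k = (n + α)! / n ! * (1 - u) ^ n := by
  rw [← neg_add_eq_sub, add_pow, mul_sum]
  refine sum_congr rfl fun k hk => ?_
  rw [laguerreCoeff_mul_factorial (Nat.lt_succ_iff.1 (mem_range.1 hk)), neg_pow]
  ring

lemma laguerreCoeff_succ_succ_mul (n α k : ℕ) :
    laguerreCoeff (n + 1) α (k + 1) * (k + 1) = -laguerreCoeff n (α + 1) k := by
  rw [laguerreCoeff, laguerreCoeff, Nat.factorial_succ, Nat.add_sub_add_right,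
    show n + 1 + α = n + (α + 1) by omega]
  push_cast
  field_simp
  ring

lemma sum_laguerreCoeff_mul_nat_mul_factorial_mul_pow (n α : ℕ) (u : ℝ) :
    ∑ k ∈ range (n + 2), laguerreCoeff (n + 1) α k * k * (k + α)! * u ^ k
      = -u * ((n + 1 + α)! / n !) * (1 - u) ^ n := by
  rw [sum_range_succ', show n + 1 + α = n + (α + 1) by omega, mul_assoc (-u),
    ← sum_laguerreCoeff_mul_factorial_mul_pow n (α + 1) u, mul_sum]
  simp only [Nat.cast_zero, mul_zero, zero_mul, add_zero]
  refine sum_congr rfl fun k _ => ?_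
  rw [Nat.cast_succ, laguerreCoeff_succ_succ_mul, show k + 1 + α = k + (α + 1) by omega, pow_succ]
  ring

lemma skewInner_exp_genLaguerre (M N n : ℕ) (hM : 0 < M) {a : ℝ} (ha : -1 < a) :
    skewInner M N (fun x => exp (a / (1 + a) * (2 * (M : ℝ) * x)))
        (fun x => genLaguerre n (2 * (M - N)) (2 * (M : ℝ) * x))
      = ((1 + a) / (2 * M)) ^ (2 * (M - N) + 1) *
          ((1 - a) * ∑ k ∈ range (n + 1),
              laguerreCoeff n (2 * (M - N)) k * k * (k + 2 * (M - N))! * (1 + a) ^ k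
            - a * ((2 * (M - N) + 1 : ℕ) : ℝ) * ∑ k ∈ range (n + 1),
              laguerreCoeff n (2 * (M - N)) k * (k + 2 * (M - N))! * (1 + a) ^ k) := by
  set c : ℝ := 2 * M
  have hc : 0 < c := by positivity
  have hu : 0 < 1 + a := by linarith
  have hβ : a / (1 + a) * c < c := mul_lt_of_lt_one_left hc ((div_lt_one hu).2 (by linarith))
  have hs : c - a / (1 + a) * c = c / (1 + a) := by field_simp; ring
  simp_rw [← mul_assoc, genLaguerre_mul_eq_sum]
  rw [skewInner_exp_sum_mul_pow M N _ _ hβ, hs, mul_sum, mul_sum, ← sum_sub_distrib, mul_sum]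
  refine sum_congr rfl fun k _ => ?_
  generalize 2 * (M - N) = α
  simp only [Nat.factorial_succ, div_pow]
  push_cast
  field_simp
  ring

/-- The skew inner products of `e_a(x) = exp((a/(1+a))·2Mx)` with the Laguerre
polynomials `f_n(x) = L_n^(2(M-N))(2Mx)`. -/
theorem stmt_12 (M N : ℕ) (hN : 1 ≤ N) (hMN : N ≤ M) (a : ℝ) (ha : -1 < a) :
    (∀ n : ℕ, 1 ≤ n →
      skewInner M N (fun x => Real.exp (a / (1 + a) * (2 * (M : ℝ) * x)))
          (fun x => genLaguerre n (2 * (M - N)) (2 * (M : ℝ) * x))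
        = ((1 + a) / (2 * (M : ℝ))) ^ (2 * (M - N) + 1) *
            ((-a) ^ (n + 1) * ((n + 2 * (M - N) + 1).factorial : ℝ) / (n.factorial : ℝ)
              - (-a) ^ (n - 1) * ((n + 2 * (M - N)).factorial : ℝ) /
                  ((n - 1).factorial : ℝ))) ∧
    skewInner M N (fun x => Real.exp (a / (1 + a) * (2 * (M : ℝ) * x)))
        (fun x => genLaguerre 0 (2 * (M - N)) (2 * (M : ℝ) * x))
      = -(((1 + a) / (2 * (M : ℝ))) ^ (2 * (M - N) + 1) * a *
          ((2 * (M - N) + 1).factorial : ℝ)) := by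
  have hM : 0 < M := by omega
  refine ⟨fun n hn => ?_, ?_⟩
  · obtain ⟨m, rfl⟩ : ∃ m, n = m + 1 := ⟨n - 1, by omega⟩
    rw [skewInner_exp_genLaguerre M N _ hM ha, sum_laguerreCoeff_mul_nat_mul_factorial_mul_pow,
      sum_laguerreCoeff_mul_factorial_mul_pow, show 1 - (1 + a) = -a by ring, Nat.add_sub_cancel,
      Nat.factorial_succ m, Nat.factorial_succ (m + 1 + 2 * (M - N))]
    generalize 2 * (M - N) = α
    push_cast
    field_simp
    ring
  · rw [skewInner_exp_genLaguerre M N 0 hM ha, sum_laguerreCoeff_mul_factorial_mul_pow,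
      sum_range_one, Nat.cast_zero]
    generalize 2 * (M - N) = α
    simp only [zero_add, mul_zero, zero_mul, pow_zero, Nat.factorial_zero, Nat.factorial_succ]
    push_cast
    ring
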